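/- arXiv:1709.01456 — 9 statements merged into one kernel-verified Lean document; each statement's English description precedes it below -/
import Mathlib

section
/- With α = 1.22 and β = 1/(2^α − 1), the inequality 2·(0.349)^α + β·(0.651)^α < 1 holds. -/
lemma rpow_as_pow {x : ℝ} (hx : 0 ≤ x) :
    x ^ (1.22 : ℝ) = (x ^ (61 : ℕ)) ^ ((50 : ℝ))⁻¹ := by
  have e : x ^ ((61 : ℕ) : ℝ) = x ^ (61 : ℕ) := Real.rpow_natCast x 61
  rw [← e, ← Real.rpow_mul hx]
  norm_num

lemma self_eq_pow_inv {u : ℝ} (hu : 0 ≤ u) :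
    u = (u ^ (50 : ℕ)) ^ ((50 : ℝ))⁻¹ := by
  have e : u ^ ((50 : ℕ) : ℝ) = u ^ (50 : ℕ) := Real.rpow_natCast u 50
  rw [← e, ← Real.rpow_mul hu]
  norm_num

lemma rpow122_lt {x u : ℝ} (hx : 0 ≤ x) (hu : 0 < u)
    (h : x ^ (61 : ℕ) < u ^ (50 : ℕ)) : x ^ (1.22 : ℝ) < u := by
  rw [rpow_as_pow hx, self_eq_pow_inv hu.le]
  exact Real.rpow_lt_rpow (pow_nonneg hx _) h (by norm_num)

lemma lt_rpow122 {x l : ℝ} (hl : 0 ≤ l) (hx : 0 < x)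
    (h : l ^ (50 : ℕ) < x ^ (61 : ℕ)) : l < x ^ (1.22 : ℝ) := by
  rw [rpow_as_pow hx.le, self_eq_pow_inv hl]
  exact Real.rpow_lt_rpow (pow_nonneg hl _) h (by norm_num)

/-- Extreme-point check for general binary trees (α = 1.22). -/
theorem stmt3 (α β : ℝ) (hα : α = 1.22) (hβ : β = 1 / ((2 : ℝ) ^ α - 1)) :
    2 * ((0.349 : ℝ)) ^ α + β * ((0.651 : ℝ)) ^ α < 1 := by
  subst hα
  have h1 : (0.349 : ℝ) ^ (1.22 : ℝ) < 0.27686 :=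
    rpow122_lt (by norm_num) (by norm_num) (by norm_num)
  have h3 : (0.651 : ℝ) ^ (1.22 : ℝ) < 0.59234 :=
    rpow122_lt (by norm_num) (by norm_num) (by norm_num)
  have h2 : (2.3294 : ℝ) < (2 : ℝ) ^ (1.22 : ℝ) :=
    lt_rpow122 (by norm_num) (by norm_num) (by norm_num)
  have h3' : (0 : ℝ) ≤ (0.651 : ℝ) ^ (1.22 : ℝ) := Real.rpow_nonneg (by norm_num) _
  have hβpos : 0 < (2 : ℝ) ^ (1.22 : ℝ) - 1 := by linarith
  have hβlt : β < 1 / 1.3294 := by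
    rw [hβ]
    apply one_div_lt_one_div_of_lt (by norm_num)
    linarith
  have hβnn : 0 ≤ β := by
    rw [hβ]
    positivity
  nlinarith [mul_le_mul hβlt.le h3.le h3' (by norm_num : (0:ℝ) ≤ 1/1.3294)]
end

section
/- With α = 1.22 and β = 1/(2^α − 1), the inequality 2β·(1/2)^α + 2·(0.082)^α + β·(0.418)^α < 1 holds. -/
lemma rpow_upper (x q : ℝ) (hx : 0 < x) (hq : 0 ≤ q) (h : x ^ (61 : ℕ) < q ^ (50 : ℕ)) :
    x ^ ((61 : ℝ) / 50) < q := by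
  have key : (x ^ ((61 : ℝ) / 50)) ^ (50 : ℕ) = x ^ (61 : ℕ) := by
    rw [← Real.rpow_natCast (x ^ ((61 : ℝ) / 50)) 50, ← Real.rpow_mul hx.le]
    rw [show ((61:ℝ)/50)*(50:ℕ) = ((61:ℕ):ℝ) by norm_num, Real.rpow_natCast]
  have h50 : (x ^ ((61 : ℝ) / 50)) ^ (50 : ℕ) < q ^ (50 : ℕ) := by rw [key]; exact h
  exact lt_of_pow_lt_pow_left₀ 50 hq h50

lemma rpow_lower (x q : ℝ) (hx : 0 < x) (h : q ^ (50 : ℕ) < x ^ (61 : ℕ)) :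
    q < x ^ ((61 : ℝ) / 50) := by
  have key : (x ^ ((61 : ℝ) / 50)) ^ (50 : ℕ) = x ^ (61 : ℕ) := by
    rw [← Real.rpow_natCast (x ^ ((61 : ℝ) / 50)) 50, ← Real.rpow_mul hx.le]
    rw [show ((61:ℝ)/50)*(50:ℕ) = ((61:ℕ):ℝ) by norm_num, Real.rpow_natCast]
  have h50 : q ^ (50 : ℕ) < (x ^ ((61 : ℝ) / 50)) ^ (50 : ℕ) := by rw [key]; exact h
  exact lt_of_pow_lt_pow_left₀ 50 (Real.rpow_nonneg hx.le _) h50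

/-- Extreme-point check from Case 2 of the general binary tree analysis (α = 1.22). -/
theorem stmt4 (α β : ℝ) (hα : α = 1.22) (hβ : β = 1 / ((2 : ℝ) ^ α - 1)) :
    2 * β * ((1 / 2 : ℝ)) ^ α + 2 * ((0.082 : ℝ)) ^ α + β * ((0.418 : ℝ)) ^ α < 1 := by
  have hα' : α = (61 : ℝ) / 50 := by rw [hα]; norm_num
  subst hα'
  have h2 : (2.329467 : ℝ) < (2 : ℝ) ^ ((61 : ℝ) / 50) :=
    rpow_lower 2 2.329467 (by norm_num) (by norm_num)
  have hU2 : ((1 / 2 : ℝ)) ^ ((61 : ℝ) / 50) < 0.4292828 :=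
    rpow_upper (1 / 2) 0.4292828 (by norm_num) (by norm_num) (by norm_num)
  have hU3 : ((0.082 : ℝ)) ^ ((61 : ℝ) / 50) < 0.0472992 :=
    rpow_upper 0.082 0.0472992 (by norm_num) (by norm_num) (by norm_num)
  have hU4 : ((0.418 : ℝ)) ^ ((61 : ℝ) / 50) < 0.3450128 :=
    rpow_upper 0.418 0.3450128 (by norm_num) (by norm_num) (by norm_num)
  have hden : (1.329467 : ℝ) < (2 : ℝ) ^ ((61 : ℝ) / 50) - 1 := by linarith
  have hβpos : 0 < β := by
    rw [hβ]; positivity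
  have hβlt : β < 1 / 1.329467 := by
    rw [hβ]
    exact one_div_lt_one_div_of_lt (by norm_num) hden
  have hp2 : (0 : ℝ) < ((1 / 2 : ℝ)) ^ ((61 : ℝ) / 50) := Real.rpow_pos_of_pos (by norm_num) _
  have hp4 : (0 : ℝ) < ((0.418 : ℝ)) ^ ((61 : ℝ) / 50) := Real.rpow_pos_of_pos (by norm_num) _
  nlinarith [mul_pos hβpos hp2, mul_pos hβpos hp4,
    mul_lt_mul_of_pos_left hU2 hβpos, mul_lt_mul_of_pos_left hU4 hβpos,
    mul_lt_mul_of_pos_right hβlt hp2, mul_lt_mul_of_pos_right hβlt hp4]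
end

section
/- Let α = 1.22 and β = 1/(2^α − 1). The function F(x, y) = 2β·x^α + y^α on the convex region {(x,y) ∈ [0,1]² : x + y ≤ 1, x ≤ 0.349} satisfies F(x,y) ≤ max(F(0,1), F(0.349, 0.651), F(0,0)) for all (x,y) in the region. -/
/-! Since `y ↦ y ^ α` is increasing, `F x y ≤ F x (1 - x)`, and `t ↦ 2β t ^ α + (1 - t) ^ α` is convex,
so on `[0, 0.349]` it is maximal at an endpoint. -/

open Real Set

lemma convexOn_one_sub_rpow {p : ℝ} (hp : 1 ≤ p) :
    ConvexOn ℝ (Iic 1) fun t : ℝ => (1 - t) ^ p := by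
  let reflect : ℝ →ᵃ[ℝ] ℝ := AffineMap.lineMap 1 0
  have hpre : reflect ⁻¹' Ici 0 = Iic 1 := by
    ext t; simp [reflect, AffineMap.lineMap_apply_ring]
  simpa [hpre, reflect, Function.comp_def, AffineMap.lineMap_apply_ring] using
    (convexOn_rpow hp).comp_affineMap reflect

lemma convexOn_mul_rpow_add_one_sub_rpow {p c : ℝ} (hp : 1 ≤ p) (hc : 0 ≤ c) :
    ConvexOn ℝ (Icc 0 1) fun t : ℝ => c * t ^ p + (1 - t) ^ p :=
  (((convexOn_rpow hp).subset Icc_subset_Ici_self (convex_Icc 0 1)).smul hc).add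
    ((convexOn_one_sub_rpow hp).subset Icc_subset_Iic_self (convex_Icc 0 1))

lemma mul_rpow_add_rpow_le_max {p c a x y : ℝ} (hp : 1 ≤ p) (hc : 0 ≤ c) (ha : a ≤ 1)
    (hx : 0 ≤ x) (hxa : x ≤ a) (hy : 0 ≤ y) (hxy : x + y ≤ 1) :
    c * x ^ p + y ^ p ≤ max 1 (c * a ^ p + (1 - a) ^ p) := by
  have hp0 : p ≠ 0 := by positivity
  calc c * x ^ p + y ^ p ≤ c * x ^ p + (1 - x) ^ p := by
        gcongr; linarith
    _ ≤ max (c * 0 ^ p + (1 - 0) ^ p) (c * a ^ p + (1 - a) ^ p) :=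
        (convexOn_mul_rpow_add_one_sub_rpow hp hc).le_max_of_mem_Icc
          ⟨le_rfl, zero_le_one⟩ ⟨hx.trans hxa, ha⟩ ⟨hx, hxa⟩
    _ = max 1 (c * a ^ p + (1 - a) ^ p) := by simp [zero_rpow hp0]

/-- On the convex region `{(x,y) ∈ [0,1]² : x + y ≤ 1, x ≤ 0.349}`, the convex function
`F(x,y) = 2β x^α + y^α` (α = 1.22, β = 1/(2^α − 1)) is bounded by its maximum over the
extreme points `(0,1)`, `(0.349, 0.651)`, `(0,0)`. -/
theorem stmt6 (α β : ℝ) (hα : α = 1.22) (hβ : β = 1 / ((2 : ℝ) ^ α - 1))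
    (F : ℝ → ℝ → ℝ) (hF : ∀ x y : ℝ, F x y = 2 * β * x ^ α + y ^ α) :
    ∀ x y : ℝ, 0 ≤ x → 0 ≤ y → x ≤ 1 → y ≤ 1 → x + y ≤ 1 → x ≤ 0.349 →
      F x y ≤ max (max (F 0 1) (F 0.349 0.651)) (F 0 0) := by
  intro x y hx hy _ _ hxy hx349
  have hα1 : 1 ≤ α := by norm_num [hα]
  have hβ0 : 0 ≤ 2 * β := by
    have : 1 < (2 : ℝ) ^ α := one_lt_rpow (by norm_num) (by linarith)
    rw [hβ]; have : 0 < (2 : ℝ) ^ α - 1 := by linarith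
    positivity
  have hF01 : F 0 1 = 1 := by simp [hF, zero_rpow (by linarith : α ≠ 0)]
  have hFa : F 0.349 0.651 = 2 * β * 0.349 ^ α + (1 - 0.349) ^ α := by norm_num [hF]
  calc F x y ≤ max (F 0 1) (F 0.349 0.651) := by
        rw [hF, hF01, hFa]
        exact mul_rpow_add_rpow_le_max hα1 hβ0 (by norm_num) hx hx349 hy hxy
    _ ≤ _ := le_max_left _ _
end

section
/- With α = 1.55, for all real a, b, r ≥ 0 satisfying a ≤ b ≤ r, a + b + r ≤ 1, and b ≤ 0.47, we have 2a^α + 2b^α + r^α ≤ 1. -/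
/-!
With `α = 1.55 ≥ 1` the left side is convex and increasing in `r`, so we may take
`r = 1 - a - b`. For fixed `b`, `a ↦ 2 a^α + (1 - b - a)^α` is convex on the admissible range
`0 ≤ a ≤ min b (1 - 2b)`, so `a` can be moved to an endpoint. On each of the three resulting
edges (`a = 0`, `a = b`, `r = b`) the left side is a convex function of `b` alone, so it suffices
to check the vertices `b ∈ {0, 1/3, 0.47}` numerically; the tightest one is
`2 · 0.47^α + 0.53^α ≈ 0.9944`.
-/
open Real Set

lemma convexOn_mul_rpow_add_mul_rpow_sub {α p q u v hi : ℝ} (hα : 1 ≤ α) (hp : 0 ≤ p)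
    (hq : 0 ≤ q) (hv : 0 ≤ v) (hhi : v * hi ≤ u) :
    ConvexOn ℝ (Icc 0 hi) fun x => p * x ^ α + q * (u - v * x) ^ α := by
  have hpow := convexOn_rpow hα
  refine ((hpow.subset Icc_subset_Ici_self (convex_Icc 0 hi)).smul hp).add ?_
  let g : ℝ →ᵃ[ℝ] ℝ := AffineMap.lineMap u (u - v)
  have hg : Icc 0 hi ⊆ g ⁻¹' Ici 0 := fun x hx => by
    simp only [g, mem_preimage, mem_Ici, AffineMap.lineMap_apply_ring']
    nlinarith [hx.1, hx.2]
  refine (((hpow.comp_affineMap g).subset hg (convex_Icc 0 hi)).smul hq).congr fun x _ => ?_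
  simp only [g, Function.comp_apply, smul_eq_mul, AffineMap.lineMap_apply_ring']
  ring_nf

lemma mul_rpow_add_mul_rpow_sub_le {α p q u v lo hi x M : ℝ} (hα : 1 ≤ α) (hp : 0 ≤ p)
    (hq : 0 ≤ q) (hv : 0 ≤ v) (hlo : 0 ≤ lo) (hhi : v * hi ≤ u) (hx : x ∈ Icc lo hi)
    (h_lo : p * lo ^ α + q * (u - v * lo) ^ α ≤ M) (h_hi : p * hi ^ α + q * (u - v * hi) ^ α ≤ M) :
    p * x ^ α + q * (u - v * x) ^ α ≤ M :=
  ((convexOn_mul_rpow_add_mul_rpow_sub hα hp hq hv hhi).le_max_of_mem_Icc ⟨hlo, hx.1.trans hx.2⟩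
    ⟨hlo.trans (hx.1.trans hx.2), le_rfl⟩ hx).trans (max_le h_lo h_hi)

lemma rpow_div_le_of_pow_le {x c : ℝ} {m n : ℕ} (hx : 0 ≤ x) (hc : 0 ≤ c) (hn : n ≠ 0)
    (h : x ^ m ≤ c ^ n) : x ^ ((m : ℝ) / n) ≤ c :=
  calc x ^ ((m : ℝ) / n) = (x ^ m) ^ (n⁻¹ : ℝ) := by
        rw [div_eq_mul_inv, rpow_mul hx, rpow_natCast]
    _ ≤ (c ^ n) ^ (n⁻¹ : ℝ) := rpow_le_rpow (by positivity) h (by positivity)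
    _ = c := pow_rpow_inv_natCast hc hn

lemma rpow_one_point_five_five_le {x c : ℝ} (hx : 0 ≤ x) (hc : 0 ≤ c) (h : x ^ 31 ≤ c ^ 20) :
    x ^ (1.55 : ℝ) ≤ c := by
  have h155 : (1.55 : ℝ) = (31 : ℕ) / (20 : ℕ) := by norm_num
  rw [h155]
  exact rpow_div_le_of_pow_le hx hc (by norm_num) h

lemma two_mul_rpow_add_rpow_one_sub_le {b : ℝ} (hb : b ∈ Icc 0 0.47) :
    2 * b ^ (1.55 : ℝ) + (1 - b) ^ (1.55 : ℝ) ≤ 1 := by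
  have h47 := rpow_one_point_five_five_le (x := 0.47) (c := 0.3103) (by norm_num) (by norm_num)
    (by norm_num)
  have h53 := rpow_one_point_five_five_le (x := 0.53) (c := 0.3738) (by norm_num) (by norm_num)
    (by norm_num)
  simpa only [one_mul] using mul_rpow_add_mul_rpow_sub_le (M := 1) (p := 2) (q := 1) (u := 1)
    (v := 1) (by norm_num) (by norm_num) (by norm_num) (by norm_num) le_rfl (by norm_num) hb
    (by norm_num) (by norm_num at h47 h53 ⊢; linarith)

lemma four_mul_rpow_add_rpow_one_sub_two_mul_le {b : ℝ} (hb : b ∈ Icc 0 (1 / 3)) :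
    4 * b ^ (1.55 : ℝ) + (1 - 2 * b) ^ (1.55 : ℝ) ≤ 1 := by
  have h3 := rpow_one_point_five_five_le (x := 1 / 3) (c := 0.19) (by norm_num) (by norm_num)
    (by norm_num)
  simpa only [one_mul] using mul_rpow_add_mul_rpow_sub_le (M := 1) (p := 4) (q := 1) (u := 1)
    (v := 2) (by norm_num) (by norm_num) (by norm_num) (by norm_num) le_rfl (by norm_num) hb
    (by norm_num) (by norm_num at h3 ⊢; linarith)

lemma three_mul_rpow_add_two_mul_rpow_one_sub_two_mul_le {b : ℝ} (hb : b ∈ Icc (1 / 3) 0.47) :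
    3 * b ^ (1.55 : ℝ) + 2 * (1 - 2 * b) ^ (1.55 : ℝ) ≤ 1 := by
  have h3 := rpow_one_point_five_five_le (x := 1 / 3) (c := 0.19) (by norm_num) (by norm_num)
    (by norm_num)
  have h47 := rpow_one_point_five_five_le (x := 0.47) (c := 0.3103) (by norm_num) (by norm_num)
    (by norm_num)
  have h06 := rpow_one_point_five_five_le (x := 0.06) (c := 0.013) (by norm_num) (by norm_num)
    (by norm_num)
  exact mul_rpow_add_mul_rpow_sub_le (M := 1) (p := 3) (q := 2) (u := 1) (v := 2) (by norm_num)
    (by norm_num) (by norm_num) (by norm_num) (by norm_num) (by norm_num) hb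
    (by norm_num at h3 ⊢; linarith) (by norm_num at h47 h06 ⊢; linarith)

/-- Case 1 inequality for ternary trees (α = 1.55). -/
theorem stmt7 (α : ℝ) (hα : α = 1.55) :
    ∀ a b r : ℝ, 0 ≤ a → 0 ≤ b → 0 ≤ r → a ≤ b → b ≤ r → a + b + r ≤ 1 → b ≤ 0.47 →
      2 * a ^ α + 2 * b ^ α + r ^ α ≤ 1 := by
  subst hα
  intro a b r ha hb hr hab hbr habr hb47
  -- the factors `1 *` put every bound in the shape of `mul_rpow_add_mul_rpow_sub_le`
  suffices 2 * a ^ (1.55 : ℝ) + 1 * (1 - b - 1 * a) ^ (1.55 : ℝ) ≤ 1 - 2 * b ^ (1.55 : ℝ) by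
    have : r ^ (1.55 : ℝ) ≤ (1 - b - 1 * a) ^ (1.55 : ℝ) :=
      rpow_le_rpow hr (by linarith) (by norm_num)
    linarith
  have h_a_eq_zero :
      2 * 0 ^ (1.55 : ℝ) + 1 * (1 - b - 1 * 0) ^ (1.55 : ℝ) ≤ 1 - 2 * b ^ (1.55 : ℝ) := by
    have := two_mul_rpow_add_rpow_one_sub_le ⟨hb, hb47⟩
    rw [zero_rpow (by norm_num), mul_zero, mul_zero, sub_zero, one_mul, zero_add]
    linarith
  rcases le_or_gt b (1 / 3) with hb3 | hb3
  · have h_a_eq_b :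
        2 * b ^ (1.55 : ℝ) + 1 * (1 - b - 1 * b) ^ (1.55 : ℝ) ≤ 1 - 2 * b ^ (1.55 : ℝ) := by
      have := four_mul_rpow_add_rpow_one_sub_two_mul_le ⟨hb, hb3⟩
      rw [show 1 - b - 1 * b = 1 - 2 * b by ring]
      linarith
    exact mul_rpow_add_mul_rpow_sub_le (by norm_num) (by norm_num) (by norm_num) (by norm_num)
      le_rfl (by linarith) ⟨ha, hab⟩ h_a_eq_zero h_a_eq_b
  · have h_r_eq_b : 2 * (1 - 2 * b) ^ (1.55 : ℝ) + 1 * (1 - b - 1 * (1 - 2 * b)) ^ (1.55 : ℝ) ≤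
        1 - 2 * b ^ (1.55 : ℝ) := by
      have := three_mul_rpow_add_two_mul_rpow_one_sub_two_mul_le ⟨hb3.le, hb47⟩
      rw [show 1 - b - 1 * (1 - 2 * b) = b by ring]
      linarith
    exact mul_rpow_add_mul_rpow_sub_le (by norm_num) (by norm_num) (by norm_num) (by norm_num)
      le_rfl (by linarith) ⟨ha, by linarith⟩ h_a_eq_zero h_r_eq_b
end

section
/- With α = 1.55, for all real a, b, r ≥ 0 with a ≤ b ≤ r, a + b + r ≤ 1, and r ≤ 0.9, we have 3a^α + b^α + r^α < 0.92. -/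
/-!
The map `(a, b, r) ↦ 3 a^α + b^α + r^α` is convex and coordinatewise increasing on the
nonnegative octant. Raising `b` to `max b (0.1 - a)` and then `r` to `1 - a - b` moves a point of
the region onto its face `a + b + r = 1`, the quadrilateral with vertices `(0, 0.1, 0.9)`,
`(0, 1/2, 1/2)`, `(0.05, 0.05, 0.9)`, `(1/3, 1/3, 1/3)`. By the maximum principle the sum is
bounded there by its values at these four vertices, the largest being `5 · 3^(-1.55) ≈ 0.911`.
-/

open Real Set

lemma Convex.add_add_smul_mem {E : Type*} [AddCommGroup E] [Module ℝ E] {s : Set E}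
    (hs : Convex ℝ s) {x y z : E} (hx : x ∈ s) (hy : y ∈ s) (hz : z ∈ s) {a b c : ℝ}
    (ha : 0 ≤ a) (hb : 0 ≤ b) (hc : 0 ≤ c) (habc : a + b + c = 1) :
    a • x + b • y + c • z ∈ s := by
  simpa [Fin.sum_univ_three, add_assoc] using
    hs.sum_mem (t := Finset.univ) (w := ![a, b, c]) (z := ![x, y, z])
      (by simp [Fin.forall_fin_succ, ha, hb, hc]) (by simp [Fin.sum_univ_three, habc])
      (by simp [Fin.forall_fin_succ, hx, hy, hz])

lemma rpow_lt_of_pow_lt {x c q : ℝ} {m n : ℕ} (hx : 0 ≤ x) (hc : 0 ≤ c) (hn : n ≠ 0)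
    (hq : q * n = m) (h : x ^ m < c ^ n) : x ^ q < c := by
  rwa [← pow_lt_pow_iff_left₀ (rpow_nonneg hx q) hc hn, ← rpow_natCast, ← rpow_mul hx, hq,
    rpow_natCast]

noncomputable def weightedRpowSum (p : ℝ) (x : ℝ × ℝ × ℝ) : ℝ :=
  3 * x.1 ^ p + x.2.1 ^ p + x.2.2 ^ p

lemma convexOn_weightedRpowSum {p : ℝ} (hp : 1 ≤ p) :
    ConvexOn ℝ (Ici 0) (weightedRpowSum p) := by
  have h := convexOn_rpow hp
  have h₁ := (h.comp_linearMap (LinearMap.fst ℝ ℝ (ℝ × ℝ))).subset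
    (fun x (hx : 0 ≤ x) => hx.1) (convex_Ici 0)
  have h₂ := (h.comp_linearMap (LinearMap.fst ℝ ℝ ℝ ∘ₗ LinearMap.snd ℝ ℝ (ℝ × ℝ))).subset
    (fun x (hx : 0 ≤ x) => hx.2.1) (convex_Ici 0)
  have h₃ := (h.comp_linearMap (LinearMap.snd ℝ ℝ ℝ ∘ₗ LinearMap.snd ℝ ℝ (ℝ × ℝ))).subset
    (fun x (hx : 0 ≤ x) => hx.2.2) (convex_Ici 0)
  exact ((h₁.smul (by norm_num : (0 : ℝ) ≤ 3)).add h₂).add h₃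

lemma monotoneOn_weightedRpowSum {p : ℝ} (hp : 0 ≤ p) :
    MonotoneOn (weightedRpowSum p) (Ici 0) := by
  rintro x ⟨h₁, h₂, h₃⟩ y - ⟨k₁, k₂, k₃⟩
  unfold weightedRpowSum
  gcongr

def faceVertices : Set (ℝ × ℝ × ℝ) :=
  {(0, 0.1, 0.9), (0, 1 / 2, 1 / 2), (0.05, 0.05, 0.9), (1 / 3, 1 / 3, 1 / 3)}

lemma faceVertices_subset_Ici : faceVertices ⊆ Ici 0 := by
  rintro _ (rfl | rfl | rfl | rfl) <;> norm_num [Prod.le_def]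

lemma weightedRpowSum_lt_of_mem_faceVertices {x : ℝ × ℝ × ℝ} (hx : x ∈ faceVertices) :
    weightedRpowSum 1.55 x < 0.92 := by
  have key (t c : ℝ) (ht : 0 ≤ t) (hc : 0 ≤ c) (h : t ^ 31 < c ^ 20) : t ^ (1.55 : ℝ) < c :=
    rpow_lt_of_pow_lt ht hc (by norm_num) (by norm_num) h
  have h₀ : (0 : ℝ) ^ (1.55 : ℝ) = 0 := zero_rpow (by norm_num)
  rcases hx with rfl | rfl | rfl | rfl <;> simp only [weightedRpowSum, h₀]
  · linarith [key 0.1 0.029 (by norm_num) (by norm_num) (by norm_num),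
      key 0.9 0.87 (by norm_num) (by norm_num) (by norm_num)]
  · linarith [key (1 / 2) 0.35 (by norm_num) (by norm_num) (by norm_num)]
  · linarith [key 0.05 0.012 (by norm_num) (by norm_num) (by norm_num),
      key 0.9 0.87 (by norm_num) (by norm_num) (by norm_num)]
  · linarith [key (1 / 3) 0.184 (by norm_num) (by norm_num) (by norm_num)]

lemma mem_convexHull_faceVertices {a b : ℝ} (ha : 0 ≤ a) (hab : a ≤ b) (hb : a + 2 * b ≤ 1)
    (h : 0.1 ≤ a + b) : (a, b, 1 - a - b) ∈ convexHull ℝ faceVertices := by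
  have hull := convex_convexHull ℝ faceVertices
  have vert {v : ℝ × ℝ × ℝ} (hv : v ∈ faceVertices) : v ∈ convexHull ℝ faceVertices :=
    subset_convexHull ℝ _ hv
  -- The diagonal `b = 0.1 + 0.7 a` from `(0, 0.1, 0.9)` to `(1/3, 1/3, 1/3)` cuts the face into
  -- two triangles; the weights below are barycentric coordinates in them.
  rcases le_total b (0.1 + 0.7 * a) with h' | h'
  · have hcomb : (a, b, 1 - a - b) =
        (10 * (b - a)) • ((0 : ℝ), (0.1 : ℝ), (0.9 : ℝ)) +
        (1 - 10 * (b - a) - (30 * (a + b) - 3) / 17) • ((0.05 : ℝ), (0.05 : ℝ), (0.9 : ℝ)) +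
        ((30 * (a + b) - 3) / 17) • ((1 / 3 : ℝ), (1 / 3 : ℝ), (1 / 3 : ℝ)) := by
      ext <;> simp <;> ring
    rw [hcomb]
    exact hull.add_add_smul_mem (vert (by simp [faceVertices])) (vert (by simp [faceVertices]))
      (vert (by simp [faceVertices])) (by linarith) (by linarith) (by linarith) (by ring)
  · have hcomb : (a, b, 1 - a - b) =
        (1 - 3 * a - 2.5 * (b - 0.1 - 0.7 * a)) • ((0 : ℝ), (0.1 : ℝ), (0.9 : ℝ)) +
        (2.5 * (b - 0.1 - 0.7 * a)) • ((0 : ℝ), (1 / 2 : ℝ), (1 / 2 : ℝ)) +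
        (3 * a) • ((1 / 3 : ℝ), (1 / 3 : ℝ), (1 / 3 : ℝ)) := by
      ext <;> simp <;> ring
    rw [hcomb]
    exact hull.add_add_smul_mem (vert (by simp [faceVertices])) (vert (by simp [faceVertices]))
      (vert (by simp [faceVertices])) (by linarith) (by linarith) (by linarith) (by ring)

/-- Claim 1 of the ternary tree analysis (α = 1.55, normalized). -/
theorem stmt8 (α : ℝ) (hα : α = 1.55) :
    ∀ a b r : ℝ, 0 ≤ a → 0 ≤ b → 0 ≤ r → a ≤ b → b ≤ r → a + b + r ≤ 1 → r ≤ 0.9 →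
      3 * a ^ α + b ^ α + r ^ α < 0.92 := by
  subst hα
  intro a b r ha hb hr hab hbr hsum hr9
  obtain ⟨b', hbb', hab', hb'₁, hb'₂, hrb'⟩ : ∃ b', b ≤ b' ∧ a ≤ b' ∧ a + 2 * b' ≤ 1 ∧
      0.1 ≤ a + b' ∧ r ≤ 1 - a - b' :=
    ⟨max b (0.1 - a), le_max_left _ _, by grind, by grind, by grind, by grind⟩
  have hface := mem_convexHull_faceVertices ha hab' hb'₁ hb'₂
  have hle : weightedRpowSum 1.55 (a, b, r) ≤ weightedRpowSum 1.55 (a, b', 1 - a - b') :=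
    monotoneOn_weightedRpowSum (by norm_num) ⟨ha, hb, hr⟩
      (convexHull_min faceVertices_subset_Ici (convex_Ici 0) hface) ⟨le_rfl, hbb', hrb'⟩
  obtain ⟨v, hv, hv_le⟩ := (convexOn_weightedRpowSum (p := 1.55) (by norm_num))
    |>.exists_ge_of_mem_convexHull faceVertices_subset_Ici hface
  exact (hle.trans hv_le).trans_lt (weightedRpowSum_lt_of_mem_faceVertices hv)
end

section
/- With α = 1.55, for all real a, b, r ≥ 0 with a ≤ b ≤ r, a + b + r ≤ 1, and b ≥ 0.47, we have 2a^α + 2b^α + 0.92·r^α ≤ 1. -/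
/-!
The left-hand side is convex in each of `a`, `b`, `r`, and the constraints confine them to
`a ∈ [0, 0.06]`, `b ∈ [0.47, 0.5]`, `r ∈ [0.47, 0.53]`. Replacing each power by its secant over
that interval leaves a linear inequality, which holds on the constraint polytope once the six
endpoint values `x ^ (31/20)` are bounded by rationals `c` via `x ^ 31 ≤ c ^ 20`.
-/

theorem ConvexOn.sub_mul_le_of_le {𝕜 : Type*} [Field 𝕜] [LinearOrder 𝕜] [IsStrictOrderedRing 𝕜]
    {s : Set 𝕜} {f : 𝕜 → 𝕜} (hf : ConvexOn 𝕜 s f) {x y z A B : 𝕜} (hx : x ∈ s) (hz : z ∈ s)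
    (hxy : x ≤ y) (hyz : y ≤ z) (hA : f x ≤ A) (hB : f z ≤ B) :
    (z - x) * f y ≤ (z - y) * A + (y - x) * B := by
  have hsecant : (z - x) * f y ≤ (z - y) * f x + (y - x) * f z := by
    rcases hxy.eq_or_lt with rfl | hxy
    · simp
    rcases hyz.eq_or_lt with rfl | hyz
    · simp
    exact hf.secant_mono_aux1 hx hz hxy hyz
  have hA' := mul_le_mul_of_nonneg_left hA (sub_nonneg.2 hyz)
  have hB' := mul_le_mul_of_nonneg_left hB (sub_nonneg.2 hxy)
  linarith

theorem Real.rpow_natCast_div_le_of_pow_le {x c : ℝ} {p q : ℕ} (hx : 0 ≤ x) (hc : 0 ≤ c)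
    (hq : q ≠ 0) (h : x ^ p ≤ c ^ q) : x ^ ((p : ℝ) / q) ≤ c := by
  rwa [← pow_le_pow_iff_left₀ (by positivity) hc hq, ← Real.rpow_mul_natCast hx,
    div_mul_cancel₀ _ (by exact_mod_cast hq), Real.rpow_natCast]

/-- Claim 3 of the ternary tree analysis (α = 1.55). -/
theorem stmt10 (α : ℝ) (hα : α = 1.55) :
    ∀ a b r : ℝ, 0 ≤ a → 0 ≤ b → 0 ≤ r → a ≤ b → b ≤ r → a + b + r ≤ 1 → 0.47 ≤ b →
      2 * a ^ α + 2 * b ^ α + 0.92 * r ^ α ≤ 1 := by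
  intro a b r ha hb hr hab hbr hsum hb47
  have hα' : α = (31 : ℕ) / (20 : ℕ) := by rw [hα]; norm_num
  have hconv : ConvexOn ℝ (Set.Ici (0 : ℝ)) (· ^ α) := convexOn_rpow (by norm_num [hα])
  have endpoint (x c : ℝ) (hx : 0 ≤ x := by norm_num) (hc : 0 ≤ c := by norm_num)
      (h : x ^ 31 ≤ c ^ 20 := by norm_num) : x ^ α ≤ c := by
    rw [hα']
    exact Real.rpow_natCast_div_le_of_pow_le hx hc (by norm_num) h
  have secant {l u x A B : ℝ} (hl : 0 ≤ l) (hlx : l ≤ x) (hxu : x ≤ u) (hA : l ^ α ≤ A)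
      (hB : u ^ α ≤ B) : (u - l) * x ^ α ≤ (u - x) * A + (x - l) * B :=
    hconv.sub_mul_le_of_le hl (hl.trans (hlx.trans hxu)) hlx hxu hA hB
  have sa := secant le_rfl ha (by linarith) (Real.zero_rpow (by norm_num [hα])).le
    (endpoint 0.06 0.0128)
  have sb := secant (by norm_num) hb47 (by linarith) (endpoint 0.47 0.3103) (endpoint 0.5 0.3416)
  have sr := secant (by norm_num) (hb47.trans hbr) (by linarith)
    (endpoint 0.47 0.3103) (endpoint 0.53 0.3738)
  linarith
end

section
/- For every n ≥ 1 there exists a set of 2n points in general orthogonal position such that the longest x-monotone straight-through path drawable on the point set has exactly n+1 vertices, yet there exists a (non-monotone) planar straight-through path using all 2n points. -/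
/-- The L-shaped (one-bend orthogonal) path from `p` to `q` with bend point
`(p.1, q.2)` if `b` and `(q.1, p.2)` otherwise. -/
def Lpath (p q : ℝ × ℝ) (b : Bool) : Set (ℝ × ℝ) :=
  segment ℝ p (if b then (p.1, q.2) else (q.1, p.2)) ∪
    segment ℝ (if b then (p.1, q.2) else (q.1, p.2)) q

/-- The bend point of the L-shaped edge from `p` to `q`. -/
def bendPt (p q : ℝ × ℝ) (b : Bool) : ℝ × ℝ :=
  if b then (p.1, q.2) else (q.1, p.2)

/-- A planar straight-through drawing of a path with `k` vertices on (distinct points of)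
the point set `P`: vertex `i` is at point `p i`, edge `i` (joining `p i` and `p (i+1)`,
for `i + 1 < k`) is an L-shaped path with bend choice `b i`; at every internal vertex the
two incident edge-segments are aligned (both horizontal or both vertical there); and two
edges intersect only if consecutive, and then only in their shared endpoint. -/
def IsSTPath (P : Finset (ℝ × ℝ)) (k : ℕ) (p : ℕ → ℝ × ℝ) (b : ℕ → Bool) : Prop :=
  (∀ i, i < k → p i ∈ P) ∧
  (∀ i j, i < k → j < k → i ≠ j → p i ≠ p j) ∧
  (∀ i, i + 2 < k →
    ((bendPt (p i) (p (i + 1)) (b i)).2 = (p (i + 1)).2 ∧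
      (bendPt (p (i + 1)) (p (i + 2)) (b (i + 1))).2 = (p (i + 1)).2) ∨
    ((bendPt (p i) (p (i + 1)) (b i)).1 = (p (i + 1)).1 ∧
      (bendPt (p (i + 1)) (p (i + 2)) (b (i + 1))).1 = (p (i + 1)).1)) ∧
  (∀ i j, i < j → j + 1 < k →
    Lpath (p i) (p (i + 1)) (b i) ∩ Lpath (p j) (p (j + 1)) (b j) ⊆
      (if j = i + 1 then {p (i + 1)} else (∅ : Set (ℝ × ℝ))))

/-- The drawing is x-monotone: the x-coordinates are increasing along the path. -/
def XMonotone (k : ℕ) (p : ℕ → ℝ × ℝ) : Prop :=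
  ∀ i j, i < j → j < k → (p i).1 < (p j).1



lemma st14_comb_bounds {a b c d : ℝ} (ha : 0 ≤ a) (hb : 0 ≤ b) (hab : a + b = 1) :
    min c d ≤ a*c + b*d ∧ a*c + b*d ≤ max c d := by
  have ha' : a = 1 - b := by linarith
  subst ha'
  rcases le_total c d with h | h
  · rw [min_eq_left h, max_eq_right h]
    constructor <;> nlinarith [mul_nonneg hb (sub_nonneg.mpr h), mul_nonneg (by linarith : (0:ℝ) ≤ 1 - b) (sub_nonneg.mpr h)]
  · rw [min_eq_right h, max_eq_left h]
    constructor <;> nlinarith [mul_nonneg hb (sub_nonneg.mpr h), mul_nonneg (by linarith : (0:ℝ) ≤ 1 - b) (sub_nonneg.mpr h)]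

lemma st14_seg_bounds {u v w : ℝ × ℝ} (h : w ∈ segment ℝ u v) :
    (min u.1 v.1 ≤ w.1 ∧ w.1 ≤ max u.1 v.1) ∧ (min u.2 v.2 ≤ w.2 ∧ w.2 ≤ max u.2 v.2) := by
  obtain ⟨a, b, ha, hb, hab, rfl⟩ := h
  have e1 : (a • u + b • v).1 = a * u.1 + b * v.1 := by simp
  have e2 : (a • u + b • v).2 = a * u.2 + b * v.2 := by simp
  rw [e1, e2]
  exact ⟨st14_comb_bounds ha hb hab, st14_comb_bounds ha hb hab⟩

lemma st14_mem_vseg {x y1 y2 y : ℝ} (h1 : min y1 y2 ≤ y) (h2 : y ≤ max y1 y2) :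
    ((x, y) : ℝ × ℝ) ∈ segment ℝ (x, y1) (x, y2) := by
  have hy : y ∈ segment ℝ y1 y2 := by
    rw [segment_eq_uIcc, Set.uIcc, Set.mem_Icc]
    exact ⟨h1, h2⟩
  obtain ⟨a, b, ha, hb, hab, hy⟩ := hy
  refine ⟨a, b, ha, hb, hab, ?_⟩
  have : a • ((x, y1) : ℝ × ℝ) + b • ((x, y2) : ℝ × ℝ) = (a*x + b*x, a*y1 + b*y2) := by
    simp [Prod.ext_iff]
  rw [this]
  simp only [Prod.mk.injEq]
  refine ⟨?_, hy⟩
  have : a*x + b*x = (a+b)*x := by ring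
  rw [this, hab, one_mul]

lemma st14_mem_hseg {y x1 x2 x : ℝ} (h1 : min x1 x2 ≤ x) (h2 : x ≤ max x1 x2) :
    ((x, y) : ℝ × ℝ) ∈ segment ℝ (x1, y) (x2, y) := by
  have hx : x ∈ segment ℝ x1 x2 := by
    rw [segment_eq_uIcc, Set.uIcc, Set.mem_Icc]
    exact ⟨h1, h2⟩
  obtain ⟨a, b, ha, hb, hab, hx⟩ := hx
  refine ⟨a, b, ha, hb, hab, ?_⟩
  have : a • ((x1, y) : ℝ × ℝ) + b • ((x2, y) : ℝ × ℝ) = (a*x1 + b*x2, a*y + b*y) := by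
    simp [Prod.ext_iff]
  rw [this]
  simp only [Prod.mk.injEq]
  refine ⟨hx, ?_⟩
  have : a*y + b*y = (a+b)*y := by ring
  rw [this, hab, one_mul]

lemma st14_Lpath_bounds {p q w : ℝ × ℝ} {bb : Bool} (h : w ∈ Lpath p q bb) :
    (min p.1 q.1 ≤ w.1 ∧ w.1 ≤ max p.1 q.1) ∧ (min p.2 q.2 ≤ w.2 ∧ w.2 ≤ max p.2 q.2) := by
  have l1 := min_le_left p.1 q.1
  have l2 := min_le_right p.1 q.1
  have l3 := le_max_left p.1 q.1
  have l4 := le_max_right p.1 q.1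
  have m1 := min_le_left p.2 q.2
  have m2 := min_le_right p.2 q.2
  have m3 := le_max_left p.2 q.2
  have m4 := le_max_right p.2 q.2
  cases bb <;> rcases h with h | h <;> have H := st14_seg_bounds h <;>
    simp only [Bool.false_eq_true, if_false, if_true] at H <;>
    obtain ⟨⟨H1, H2⟩, ⟨H3, H4⟩⟩ := H <;>
    simp only [min_self, max_self] at H1 H2 H3 H4 <;>
    refine ⟨⟨?_, ?_⟩, ⟨?_, ?_⟩⟩ <;>
    simp only [min_le_iff, le_max_iff] at H1 H2 H3 H4 ⊢ <;>
    tauto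

lemma st14_adj_TF {p q r : ℝ × ℝ}
    (hx : p.1 < q.1 ∧ q.1 < r.1 ∨ r.1 < q.1 ∧ q.1 < p.1) :
    Lpath p q true ∩ Lpath q r false ⊆ {q} := by
  rintro w ⟨h1, h2⟩
  simp only [Lpath, Bool.false_eq_true, eq_self_iff_true, if_false, if_true] at h1 h2
  rcases h1 with h1 | h1 <;> rcases h2 with h2 | h2 <;>
    have B1 := st14_seg_bounds h1 <;> have B2 := st14_seg_bounds h2 <;>
    simp only [min_self, max_self] at B1 B2 <;>
    obtain ⟨⟨a1, a2⟩, ⟨a3, a4⟩⟩ := B1 <;> obtain ⟨⟨c1, c2⟩, ⟨c3, c4⟩⟩ := B2 <;>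
    simp only [min_le_iff, le_max_iff] at a1 a2 a3 a4 c1 c2 c3 c4 <;>
    rcases hx with ⟨hx1, hx2⟩ | ⟨hx1, hx2⟩
  -- case s1 t1 : w.1 = p.1, w.1 in x-range of [q,r]
  · exfalso; rcases c1 with c1 | c1 <;> rcases c2 with c2 | c2 <;> linarith
  · exfalso; rcases c1 with c1 | c1 <;> rcases c2 with c2 | c2 <;> linarith
  -- case s1 t2 : w.1 = p.1 and w.1 = r.1
  · exfalso; linarith
  · exfalso; linarith
  -- case s2 t1 : success
  · have hw1 : w.1 = q.1 := by rcases a1 with a1 | a1 <;> rcases a2 with a2 | a2 <;>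
      rcases c1 with c1 | c1 <;> rcases c2 with c2 | c2 <;> linarith
    have hw2 : w.2 = q.2 := le_antisymm (by tauto) (by tauto)
    have : w = (q.1, q.2) := Prod.ext hw1 hw2
    simpa using this
  · have hw1 : w.1 = q.1 := by rcases a1 with a1 | a1 <;> rcases a2 with a2 | a2 <;>
      rcases c1 with c1 | c1 <;> rcases c2 with c2 | c2 <;> linarith
    have hw2 : w.2 = q.2 := le_antisymm (by tauto) (by tauto)
    have : w = (q.1, q.2) := Prod.ext hw1 hw2
    simpa using this
  -- case s2 t2 : w.1 = r.1 in x-range [p,q]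
  · exfalso; rcases a1 with a1 | a1 <;> rcases a2 with a2 | a2 <;> linarith
  · exfalso; rcases a1 with a1 | a1 <;> rcases a2 with a2 | a2 <;> linarith

lemma st14_adj_FT {p q r : ℝ × ℝ}
    (hy : p.2 < q.2 ∧ q.2 < r.2 ∨ r.2 < q.2 ∧ q.2 < p.2) :
    Lpath p q false ∩ Lpath q r true ⊆ {q} := by
  rintro w ⟨h1, h2⟩
  simp only [Lpath, Bool.false_eq_true, eq_self_iff_true, if_false, if_true] at h1 h2
  rcases h1 with h1 | h1 <;> rcases h2 with h2 | h2 <;>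
    have B1 := st14_seg_bounds h1 <;> have B2 := st14_seg_bounds h2 <;>
    simp only [min_self, max_self] at B1 B2 <;>
    obtain ⟨⟨a1, a2⟩, ⟨a3, a4⟩⟩ := B1 <;> obtain ⟨⟨c1, c2⟩, ⟨c3, c4⟩⟩ := B2 <;>
    simp only [min_le_iff, le_max_iff] at a1 a2 a3 a4 c1 c2 c3 c4 <;>
    rcases hy with ⟨hy1, hy2⟩ | ⟨hy1, hy2⟩
  -- s1 : w.2 = p.2 ; t1 : w.2 in y-range [q,r]
  · exfalso; rcases c3 with c3 | c3 <;> rcases c4 with c4 | c4 <;> linarith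
  · exfalso; rcases c3 with c3 | c3 <;> rcases c4 with c4 | c4 <;> linarith
  -- s1, t2 : w.2 = p.2 and w.2 = r.2
  · exfalso; linarith
  · exfalso; linarith
  -- s2 t1 : success : w.1 = q.1, w.2 in both y-ranges
  · have hw2 : w.2 = q.2 := by rcases a3 with a3 | a3 <;> rcases a4 with a4 | a4 <;>
      rcases c3 with c3 | c3 <;> rcases c4 with c4 | c4 <;> linarith
    have hw1 : w.1 = q.1 := le_antisymm (by tauto) (by tauto)
    have : w = (q.1, q.2) := Prod.ext hw1 hw2
    simpa using this
  · have hw2 : w.2 = q.2 := by rcases a3 with a3 | a3 <;> rcases a4 with a4 | a4 <;>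
      rcases c3 with c3 | c3 <;> rcases c4 with c4 | c4 <;> linarith
    have hw1 : w.1 = q.1 := le_antisymm (by tauto) (by tauto)
    have : w = (q.1, q.2) := Prod.ext hw1 hw2
    simpa using this
  -- s2 t2 : w.2 = r.2 in y-range [p,q]
  · exfalso; rcases a3 with a3 | a3 <;> rcases a4 with a4 | a4 <;> linarith
  · exfalso; rcases a3 with a3 | a3 <;> rcases a4 with a4 | a4 <;> linarith

lemma st14_disj_x {a b c d : ℝ × ℝ} {bu bv : Bool} {x0 : ℝ}
    (h1 : a.1 ≤ x0) (h2 : b.1 ≤ x0) (h3 : x0 < c.1) (h4 : x0 < d.1) :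
    Lpath a b bu ∩ Lpath c d bv ⊆ ∅ := by
  rintro w ⟨hw1, hw2⟩
  have B1 := (st14_Lpath_bounds hw1).1.2
  have B2 := (st14_Lpath_bounds hw2).1.1
  simp only [le_max_iff, min_le_iff] at B1 B2
  exfalso
  rcases B1 with B1 | B1 <;> rcases B2 with B2 | B2 <;> linarith

lemma st14_Lpath_F_shape {p q w : ℝ × ℝ} (h : w ∈ Lpath p q false) :
    w.2 = p.2 ∨ w.1 = q.1 := by
  simp only [Lpath, Bool.false_eq_true, eq_self_iff_true, if_false, if_true] at h
  rcases h with h | h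
  · left
    have B := (st14_seg_bounds h).2
    simp only [min_self, max_self] at B
    exact le_antisymm B.2 B.1
  · right
    have B := (st14_seg_bounds h).1
    simp only [min_self, max_self] at B
    exact le_antisymm B.2 B.1

def st14z (n m : ℕ) : ℕ := if m < n then n - 1 - m else 3*n - 1 - m

noncomputable def st14pt (n m : ℕ) : ℝ × ℝ := ((m : ℝ), (st14z n m : ℝ))

def st14b (n i : ℕ) : Bool := decide (i % 2 = n % 2)

lemma st14z_inj {n m m' : ℕ} (hn : 1 ≤ n) (hm : m < 2*n) (hm' : m' < 2*n)
    (h : st14z n m = st14z n m') : m = m' := by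
  unfold st14z at h
  split_ifs at h <;> omega

lemma st14pt_fst (n m : ℕ) : (st14pt n m).1 = (m : ℝ) := rfl
lemma st14pt_snd (n m : ℕ) : (st14pt n m).2 = (st14z n m : ℝ) := rfl

lemma st14_card (n : ℕ) : ((Finset.range (2*n)).image (st14pt n)).card = 2*n := by
  rw [Finset.card_image_of_injective _ ?_, Finset.card_range]
  intro a b hab
  have : ((a : ℝ)) = (b : ℝ) := congrArg Prod.fst hab
  exact_mod_cast this

lemma st14_genpos (n : ℕ) (hn : 1 ≤ n) :
    ∀ q ∈ (Finset.range (2*n)).image (st14pt n), ∀ q' ∈ (Finset.range (2*n)).image (st14pt n),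
      q ≠ q' → q.1 ≠ q'.1 ∧ q.2 ≠ q'.2 := by
  intro q hq q' hq' hne
  obtain ⟨m, hm, rfl⟩ := Finset.mem_image.mp hq
  obtain ⟨m', hm', rfl⟩ := Finset.mem_image.mp hq'
  rw [Finset.mem_range] at hm hm'
  have hmm : m ≠ m' := fun h => hne (by rw [h])
  constructor
  · simp only [st14pt_fst]
    exact_mod_cast fun h => hmm (by exact_mod_cast h)
  · simp only [st14pt_snd]
    intro h
    exact hmm (st14z_inj hn hm hm' (by exact_mod_cast h))

/-- alignment holds automatically for the alternating bend pattern -/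
lemma st14_align (n : ℕ) (p : ℕ → ℝ × ℝ) (i : ℕ) :
    ((bendPt (p i) (p (i + 1)) (st14b n i)).2 = (p (i + 1)).2 ∧
      (bendPt (p (i + 1)) (p (i + 2)) (st14b n (i + 1))).2 = (p (i + 1)).2) ∨
    ((bendPt (p i) (p (i + 1)) (st14b n i)).1 = (p (i + 1)).1 ∧
      (bendPt (p (i + 1)) (p (i + 2)) (st14b n (i + 1))).1 = (p (i + 1)).1) := by
  by_cases h : i % 2 = n % 2
  · left
    have h2 : ¬ ((i+1) % 2 = n % 2) := by omega
    simp [st14b, bendPt, h, h2]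
  · right
    have h2 : (i+1) % 2 = n % 2 := by omega
    simp [st14b, bendPt, h, h2]

lemma st14_upper (n : ℕ) (hn : 1 ≤ n) :
    ∀ k p b, IsSTPath ((Finset.range (2*n)).image (st14pt n)) k p b →
      XMonotone k p → k ≤ n + 1 := by
  intro k p b hst hmono
  by_contra hcon
  push_neg at hcon
  have hk : n + 2 ≤ k := hcon
  obtain ⟨hmem, hdist, halign, hint⟩ := hst
  -- index function
  have hex : ∀ i, ∃ m, i < k → m < 2*n ∧ p i = st14pt n m := by
    intro i
    by_cases h : i < k
    · obtain ⟨m, hm, hm2⟩ := Finset.mem_image.mp (hmem i h)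
      exact ⟨m, fun _ => ⟨Finset.mem_range.mp hm, hm2.symm⟩⟩
    · exact ⟨0, fun hc => absurd hc h⟩
  choose σ hσ using hex
  have hσlt : ∀ i, i < k → σ i < 2*n := fun i h => (hσ i h).1
  have hp : ∀ i, i < k → p i = st14pt n (σ i) := fun i h => (hσ i h).2
  have hσmono : ∀ i j, i < j → j < k → σ i < σ j := by
    intro i j hij hjk
    have h := hmono i j hij hjk
    rw [hp i (by omega), hp j hjk] at h
    simp only [st14pt_fst] at h
    exact_mod_cast h
  -- y-coordinates as naturals
  set Z : ℕ → ℕ := fun i => st14z n (σ i) with hZ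
  have hpy : ∀ i, i < k → (p i).2 = (Z i : ℝ) := by
    intro i h; rw [hp i h]; rfl
  have hyne : ∀ i j, i < k → j < k → i ≠ j → Z i ≠ Z j := by
    intro i j hik hjk hij he
    have : σ i = σ j := st14z_inj hn (hσlt i hik) (hσlt j hjk) he
    exact hdist i j hik hjk hij (by rw [hp i hik, hp j hjk, this])
  have hxne : ∀ i j, i < j → j < k → (p i).1 ≠ (p j).1 :=
    fun i j hij hjk => ne_of_lt (hmono i j hij hjk)
  -- alternation of bends
  have halt : ∀ i, i + 2 < k →
      (b i = true ∧ b (i+1) = false) ∨ (b i = false ∧ b (i+1) = true) := by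
    intro i h
    have hne1 : (p i).2 ≠ (p (i+1)).2 := by
      rw [hpy i (by omega), hpy (i+1) (by omega)]
      exact_mod_cast hyne i (i+1) (by omega) (by omega) (by omega)
    have hne2 : (p (i+2)).2 ≠ (p (i+1)).2 := by
      rw [hpy (i+2) (by omega), hpy (i+1) (by omega)]
      exact_mod_cast hyne (i+2) (i+1) (by omega) (by omega) (by omega)
    have hne3 : (p (i+1)).1 ≠ (p (i+2)).1 := hxne (i+1) (i+2) (by omega) (by omega)
    have hne4 : (p i).1 ≠ (p (i+1)).1 := hxne i (i+1) (by omega) (by omega)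
    rcases halign i h with ⟨h1, h2⟩ | ⟨h1, h2⟩
    · left
      constructor
      · cases hbi : b i
        · rw [hbi] at h1; simp only [bendPt, Bool.false_eq_true, if_false] at h1
          exact absurd h1 hne1
        · rfl
      · cases hbj : b (i+1)
        · rfl
        · rw [hbj] at h2; simp only [bendPt, if_true] at h2
          exact absurd h2 hne2
    · right
      constructor
      · cases hbi : b i
        · rfl
        · rw [hbi] at h1; simp only [bendPt, if_true] at h1
          exact absurd h1 hne4
      · cases hbj : b (i+1)
        · rw [hbj] at h2; simp only [bendPt, Bool.false_eq_true, if_false] at h2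
          exact absurd h2 (Ne.symm hne3)
        · rfl
  -- V-vertex: both steps strictly monotone in y
  have hV : ∀ i, i + 2 < k → b i = false →
      ((p i).2 < (p (i+1)).2 ∧ (p (i+1)).2 < (p (i+2)).2) ∨
      ((p (i+2)).2 < (p (i+1)).2 ∧ (p (i+1)).2 < (p i).2) := by
    intro i hik hbF
    have hbT : b (i+1) = true := by
      rcases halt i hik with ⟨h1, _⟩ | ⟨_, h2⟩
      · rw [hbF] at h1; exact absurd h1 (by simp)
      · exact h2
    have hne01 : (p i).2 ≠ (p (i+1)).2 := by
      rw [hpy i (by omega), hpy (i+1) (by omega)]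
      exact_mod_cast hyne i (i+1) (by omega) (by omega) (by omega)
    have hne12 : (p (i+1)).2 ≠ (p (i+2)).2 := by
      rw [hpy (i+1) (by omega), hpy (i+2) (by omega)]
      exact_mod_cast hyne (i+1) (i+2) (by omega) (by omega) (by omega)
    by_contra hcc
    push_neg at hcc
    have hcase : ((p i).2 < (p (i+1)).2 ∧ (p (i+2)).2 < (p (i+1)).2) ∨
        ((p (i+1)).2 < (p i).2 ∧ (p (i+1)).2 < (p (i+2)).2) := by
      rcases lt_or_gt_of_ne hne01 with h | h <;> rcases lt_or_gt_of_ne hne12 with h' | h'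
      · exact absurd h' (not_lt.mpr (hcc.1 h))
      · exact Or.inl ⟨h, h'⟩
      · exact Or.inr ⟨h, h'⟩
      · exact absurd h (not_lt.mpr (hcc.2 h'))
    have hkey : ∀ ys : ℝ, ys ≠ (p (i+1)).2 →
        min (p i).2 (p (i+1)).2 ≤ ys → ys ≤ max (p i).2 (p (i+1)).2 →
        min (p (i+1)).2 (p (i+2)).2 ≤ ys → ys ≤ max (p (i+1)).2 (p (i+2)).2 → False := by
      intro ys hysne hy1 hy2 hy3 hy4
      have hw1 : (((p (i+1)).1, ys) : ℝ × ℝ) ∈ Lpath (p i) (p (i+1)) (b i) := by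
        rw [hbF]
        right
        simp only [Lpath, Bool.false_eq_true, if_false]
        exact st14_mem_vseg hy1 hy2
      have hw2 : (((p (i+1)).1, ys) : ℝ × ℝ) ∈ Lpath (p (i+1)) (p (i+2)) (b (i+1)) := by
        rw [hbT]
        left
        simp only [Lpath, if_true]
        exact st14_mem_vseg hy3 hy4
      have := hint i (i+1) (by omega) (by omega) ⟨hw1, hw2⟩
      rw [if_pos rfl] at this
      simp only [Set.mem_singleton_iff] at this
      exact hysne (congrArg Prod.snd this)
    rcases hcase with ⟨hA, hB⟩ | ⟨hA, hB⟩
    · refine hkey (max (p i).2 (p (i+2)).2) ?_ ?_ ?_ ?_ ?_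
      · exact ne_of_lt (max_lt hA hB)
      · exact le_trans (min_le_left _ _) (le_max_left _ _)
      · exact max_le (le_max_left _ _) (hB.le.trans (le_max_right _ _))
      · exact le_trans (min_le_right _ _) (le_max_right _ _)
      · exact max_le (hA.le.trans (le_max_left _ _)) (le_max_right _ _)
    · refine hkey (min (p i).2 (p (i+2)).2) ?_ ?_ ?_ ?_ ?_
      · exact ne_of_gt (lt_min hA hB)
      · exact le_min (min_le_left _ _) ((min_le_right _ _).trans hB.le)
      · exact le_trans (min_le_left _ _) (le_max_left _ _)
      · exact le_min ((min_le_left _ _).trans hA.le) (min_le_right _ _)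
      · exact le_trans (min_le_right _ _) (le_max_right _ _)
  -- now the combinatorics
  have hlt : ∀ i j, i < k → j < k → (p i).2 < (p j).2 → Z i < Z j := by
    intro i j hi hj h
    rw [hpy i hi, hpy j hj] at h
    exact_mod_cast h
  have hM1 : ∀ i j l, i < j → j < l → l < k → Z i < Z j → Z j < Z l → False := by
    intro i j l hij hjl hlk hz1 hz2
    have m1 := hσmono i j hij (by omega)
    have m2 := hσmono j l hjl hlk
    have hl := hσlt l hlk
    have hl2 := hσlt j (by omega)
    simp only [hZ] at hz1 hz2
    unfold st14z at hz1 hz2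
    split_ifs at hz1 hz2 <;> omega
  have hVd : ∀ i, i + 2 < k → b i = false → Z i > Z (i+1) ∧ Z (i+1) > Z (i+2) := by
    intro i h hb
    rcases hV i h hb with ⟨h1, h2⟩ | ⟨h1, h2⟩
    · exact absurd (hlt (i+1) (i+2) (by omega) (by omega) h2)
        (fun hz2 => hM1 i (i+1) (i+2) (by omega) (by omega) (by omega)
          (hlt i (i+1) (by omega) (by omega) h1) hz2)
    · exact ⟨hlt (i+1) i (by omega) (by omega) h2, hlt (i+2) (i+1) (by omega) (by omega) h1⟩
  have hdown : ∀ s, 1 ≤ s → s + 1 ≤ n → Z s > Z (s+1) := by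
    intro s h1 h2
    have hk1 : s + 2 < k := by omega
    cases hbs : b s
    · exact (hVd s hk1 hbs).1
    · have hk2 : s - 1 + 2 < k := by omega
      have e1 : s - 1 + 1 = s := by omega
      have e2 : s - 1 + 2 = s + 1 := by omega
      have hbprev : b (s-1) = false := by
        rcases halt (s-1) hk2 with ⟨x1, x2⟩ | ⟨x1, x2⟩
        · rw [e1, hbs] at x2; simp at x2
        · exact x1
      have h := hVd (s-1) hk2 hbprev
      rw [e1, e2] at h
      exact h.2
  have hsame : ∀ s, 1 ≤ s → s ≤ n → (σ 1 < n ↔ σ s < n) := by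
    intro s
    induction s with
    | zero => intro h; exact absurd h (by omega)
    | succ m ih =>
      intro h1 h2
      rcases Nat.lt_or_ge m 1 with hm | hm
      · have : m = 0 := by omega
        subst this
        exact Iff.rfl
      · have hz := hdown m hm (by omega)
        have hmm := hσmono m (m+1) (by omega) (by omega)
        have hl := hσlt (m+1) (by omega)
        have hstep : σ m < n ↔ σ (m+1) < n := by
          simp only [hZ] at hz
          unfold st14z at hz
          split_ifs at hz <;> constructor <;> intro <;> omega
        exact (ih hm (by omega)).trans hstep
  have hmono' : ∀ i j, i ≤ j → j < k → σ i + (j - i) ≤ σ j := by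
    intro i j hij hjk
    induction j with
    | zero =>
      have : i = 0 := by omega
      subst this; simp
    | succ m ih =>
      rcases Nat.eq_or_lt_of_le hij with he | hlt2
      · subst he; simp
      · have ha := ih (by omega) (by omega)
        have hb2 := hσmono m (m+1) (by omega) hjk
        omega
  have h01 := hσmono 0 1 (by omega) (by omega)
  rcases Nat.lt_or_ge (σ 1) n with hc | hc
  · have hs := (hsame n (by omega) le_rfl).mp hc
    have hsp := hmono' 1 n (by omega) (by omega)
    omega
  · have hsp := hmono' 1 (n+1) (by omega) (by omega)
    have hl := hσlt (n+1) (by omega)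
    omega

def st14sig1 (n i : ℕ) : ℕ := if i < n then i else 2*n-1

lemma st14sig1_mono {n i j : ℕ} (h : i < j) (h2 : j ≤ n) :
    st14sig1 n i < st14sig1 n j := by
  unfold st14sig1; split_ifs <;> omega

lemma st14z_sig1 {n i : ℕ} (hn : 1 ≤ n) (h : i ≤ n) :
    st14z n (st14sig1 n i) = if i < n then n-1-i else n := by
  unfold st14sig1 st14z; split_ifs <;> omega

lemma st14_mono_exists (n : ℕ) (hn : 1 ≤ n) :
    ∃ p b, IsSTPath ((Finset.range (2*n)).image (st14pt n)) (n+1) p b ∧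
      XMonotone (n+1) p := by
  refine ⟨fun i => st14pt n (st14sig1 n i), st14b n, ⟨?_, ?_, ?_, ?_⟩, ?_⟩
  · intro i hi
    exact Finset.mem_image.mpr ⟨st14sig1 n i,
      Finset.mem_range.mpr (by unfold st14sig1; split_ifs <;> omega), rfl⟩
  · intro i j hi hj hij heq
    have h1 : ((st14sig1 n i : ℕ) : ℝ) = (st14sig1 n j : ℕ) := congrArg Prod.fst heq
    have h2 : st14sig1 n i = st14sig1 n j := by exact_mod_cast h1
    unfold st14sig1 at h2; split_ifs at h2 <;> omega
  · intro i _
    exact st14_align n (fun l => st14pt n (st14sig1 n l)) i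
  · intro i j hij hjk
    by_cases hj : j = i + 1
    · rw [if_pos hj]
      subst hj
      have hle : i + 2 ≤ n := by omega
      by_cases hbi : i % 2 = n % 2
      · have hb1 : st14b n i = true := by simp [st14b, hbi]
        have hb2 : st14b n (i+1) = false := by simp [st14b]; omega
        rw [hb1, hb2]
        refine st14_adj_TF (Or.inl ⟨?_, ?_⟩)
        · simp only [st14pt_fst]
          exact_mod_cast st14sig1_mono (by omega) (by omega)
        · simp only [st14pt_fst]
          exact_mod_cast st14sig1_mono (by omega) (by omega)
      · have hb1 : st14b n i = false := by simp [st14b, hbi]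
        have hb2 : st14b n (i+1) = true := by simp [st14b]; omega
        rw [hb1, hb2]
        refine st14_adj_FT (Or.inr ⟨?_, ?_⟩)
        · -- (p (i+2)).2 < (p (i+1)).2 : values n-1-(i+2) < n-1-(i+1), need i+2 < n
          have hin : i + 2 < n := by
            rcases Nat.lt_or_ge (i+2) n with h | h
            · exact h
            · exfalso; have : i + 2 = n := by omega
              omega
          simp only [st14pt_snd]
          rw [st14z_sig1 hn (by omega), st14z_sig1 hn (by omega),
            if_pos (by omega : i + 2 < n), if_pos (by omega : i + 1 < n)]
          exact_mod_cast (by omega : n-1-(i+2) < n-1-(i+1))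
        · have hin : i + 2 < n := by
            rcases Nat.lt_or_ge (i+2) n with h | h
            · exact h
            · exfalso; have : i + 2 = n := by omega
              omega
          simp only [st14pt_snd]
          rw [st14z_sig1 hn (by omega), st14z_sig1 hn (by omega),
            if_pos (by omega : i + 1 < n), if_pos (by omega : i < n)]
          exact_mod_cast (by omega : n-1-(i+1) < n-1-i)
    · rw [if_neg hj]
      refine st14_disj_x (x0 := ((st14sig1 n (i+1) : ℕ) : ℝ)) ?_ ?_ ?_ ?_
      · simp only [st14pt_fst]
        exact_mod_cast le_of_lt (st14sig1_mono (by omega) (by omega))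
      · exact le_refl _
      · simp only [st14pt_fst]
        exact_mod_cast st14sig1_mono (by omega) (by omega)
      · simp only [st14pt_fst]
        exact_mod_cast st14sig1_mono (by omega) (by omega)
  · intro i j hij hjk
    simp only [st14pt_fst]
    exact_mod_cast st14sig1_mono hij (by omega)

def st14sig2 (n i : ℕ) : ℕ := if i < n then i else 3*n-1-i

lemma st14z_sig2 {n i : ℕ} (hn : 1 ≤ n) (h : i < 2*n) :
    st14z n (st14sig2 n i) = if i < n then n-1-i else i := by
  unfold st14sig2 st14z; split_ifs <;> omega

lemma st14_ham_exists (n : ℕ) (hn : 1 ≤ n) :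
    ∃ p b, IsSTPath ((Finset.range (2*n)).image (st14pt n)) (2*n) p b := by
  refine ⟨fun i => st14pt n (st14sig2 n i), st14b n, ?_, ?_, ?_, ?_⟩
  · intro i hi
    exact Finset.mem_image.mpr ⟨st14sig2 n i,
      Finset.mem_range.mpr (by unfold st14sig2; split_ifs <;> omega), rfl⟩
  · intro i j hi hj hij heq
    have h1 : ((st14sig2 n i : ℕ) : ℝ) = (st14sig2 n j : ℕ) := congrArg Prod.fst heq
    have h2 : st14sig2 n i = st14sig2 n j := by exact_mod_cast h1
    unfold st14sig2 at h2; split_ifs at h2 <;> omega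
  · intro i _
    exact st14_align n (fun l => st14pt n (st14sig2 n l)) i
  · intro i j hij hjk
    by_cases hj : j = i + 1
    · rw [if_pos hj]
      subst hj
      have hle : i + 2 ≤ 2*n - 1 := by omega
      by_cases hbi : i % 2 = n % 2
      · have hb1 : st14b n i = true := by simp [st14b, hbi]
        have hb2 : st14b n (i+1) = false := by simp [st14b]; omega
        rw [hb1, hb2]
        refine st14_adj_TF ?_
        rcases Nat.lt_or_ge i n with hin | hin
        · -- i < n; i = n-1 excluded by parity, so i+2 ≤ n and σ2 increasing there
          have hin' : i + 2 ≤ n := by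
            rcases Nat.lt_or_ge (i+1) n with h | h
            · omega
            · exfalso; have : i = n - 1 := by omega
              omega
          refine Or.inl ⟨?_, ?_⟩ <;>
          · simp only [st14pt_fst]
            exact Nat.cast_lt.mpr (by unfold st14sig2; split_ifs <;> omega)
        · -- i ≥ n : σ2 decreasing
          refine Or.inr ⟨?_, ?_⟩ <;>
          · simp only [st14pt_fst]
            exact Nat.cast_lt.mpr (by unfold st14sig2; split_ifs <;> omega)
      · have hb1 : st14b n i = false := by simp [st14b, hbi]
        have hb2 : st14b n (i+1) = true := by simp [st14b]; omega
        rw [hb1, hb2]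
        refine st14_adj_FT ?_
        rcases Nat.lt_or_ge (i+2) n with hin | hin
        · -- fully left : y decreasing
          refine Or.inr ⟨?_, ?_⟩ <;>
          · simp only [st14pt_snd]
            refine Nat.cast_lt.mpr ?_
            rw [st14z_sig2 hn (by omega), st14z_sig2 hn (by omega)]
            split_ifs <;> omega
        · -- i ≥ n-2; i = n-2 excluded by parity, so i ≥ n-1 : y increasing
          have hin' : n - 1 ≤ i := by
            rcases Nat.lt_or_ge i (n-1) with h | h
            · exfalso; have : i = n - 2 := by omega
              omega
            · exact h
          refine Or.inl ⟨?_, ?_⟩ <;>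
          · simp only [st14pt_snd]
            refine Nat.cast_lt.mpr ?_
            rw [st14z_sig2 hn (by omega), st14z_sig2 hn (by omega)]
            split_ifs <;> omega
    · rw [if_neg hj]
      have hij2 : i + 2 ≤ j := by omega
      rcases Nat.lt_or_ge j n with hjn | hjn
      · -- (A) both edges within indices ≤ n : x-separated
        refine st14_disj_x (x0 := ((st14sig2 n (i+1) : ℕ) : ℝ)) ?_ ?_ ?_ ?_ <;>
          simp only [st14pt_fst]
        · exact Nat.cast_le.mpr (by unfold st14sig2; split_ifs <;> omega)
        · exact le_refl _
        · exact Nat.cast_lt.mpr (by unfold st14sig2; split_ifs <;> omega)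
        · exact Nat.cast_lt.mpr (by unfold st14sig2; split_ifs <;> omega)
      · rcases Nat.lt_or_ge i (n-1) with hin | hin
        · -- (B) edge i fully left (i+1 ≤ n-1), edge j right (j ≥ n) : x-separated at n-1
          refine st14_disj_x (x0 := ((n-1 : ℕ) : ℝ)) ?_ ?_ ?_ ?_ <;>
            simp only [st14pt_fst]
          · exact Nat.cast_le.mpr (by unfold st14sig2; split_ifs <;> omega)
          · exact Nat.cast_le.mpr (by unfold st14sig2; split_ifs <;> omega)
          · exact Nat.cast_lt.mpr (by unfold st14sig2; split_ifs <;> omega)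
          · exact Nat.cast_lt.mpr (by unfold st14sig2; split_ifs <;> omega)
        · rcases Nat.lt_or_ge i n with hie | hie
          · -- (C) i = n-1 : transition edge vs right edge j ≥ n+1
            have hieq : i = n - 1 := by omega
            have hjge : n + 1 ≤ j := by omega
            rintro w ⟨hw1, hw2⟩
            have hb : st14b n i = false := by simp [st14b]; omega
            rw [hb] at hw1
            have hs := st14_Lpath_F_shape hw1
            have B := st14_Lpath_bounds hw2
            exfalso
            rcases hs with hs | hs
            · -- w.2 = 0, but edge j has y ≥ j ≥ n+1
              have hz : (st14pt n (st14sig2 n i)).2 = ((0 : ℕ) : ℝ) := by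
                simp only [st14pt_snd]
                rw [st14z_sig2 hn (by omega)]
                congr 1
                split_ifs <;> omega
              rw [hz] at hs
              have hlo := B.2.1
              simp only [st14pt_snd, min_le_iff] at hlo
              rw [hs] at hlo
              rcases hlo with h | h
              · have : st14z n (st14sig2 n j) ≤ 0 := by exact_mod_cast h
                rw [st14z_sig2 hn (by omega)] at this
                split_ifs at this <;> omega
              · have : st14z n (st14sig2 n (j+1)) ≤ 0 := by exact_mod_cast h
                rw [st14z_sig2 hn (by omega)] at this
                split_ifs at this <;> omega
            · -- w.1 = 2n-1, but edge j has x ≤ 2n-2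
              have hx : (st14pt n (st14sig2 n (i+1))).1 = ((2*n-1 : ℕ) : ℝ) := by
                simp only [st14pt_fst]
                congr 1
                unfold st14sig2; split_ifs <;> omega
              rw [hx] at hs
              have hhi := B.1.2
              simp only [st14pt_fst, le_max_iff] at hhi
              rw [hs] at hhi
              rcases hhi with h | h
              · have : 2*n-1 ≤ st14sig2 n j := by exact_mod_cast h
                unfold st14sig2 at this; split_ifs at this <;> omega
              · have : 2*n-1 ≤ st14sig2 n (j+1) := by exact_mod_cast h
                unfold st14sig2 at this; split_ifs at this <;> omega
          · -- (D) both edges right (i ≥ n) : x-separated, edge j is left of edge i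
            rintro w ⟨h1, h2⟩
            refine st14_disj_x (x0 := ((3*n-1-j : ℕ) : ℝ)) ?_ ?_ ?_ ?_ ⟨h2, h1⟩ <;>
              simp only [st14pt_fst]
            · exact Nat.cast_le.mpr (by unfold st14sig2; split_ifs <;> omega)
            · exact Nat.cast_le.mpr (by unfold st14sig2; split_ifs <;> omega)
            · exact Nat.cast_lt.mpr (by unfold st14sig2; split_ifs <;> omega)
            · exact Nat.cast_lt.mpr (by unfold st14sig2; split_ifs <;> omega)

/-- For every `n ≥ 1` there is a set of `2n` points in general orthogonal position on
which every x-monotone straight-through path has at most `n+1` vertices, some x-monotone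
straight-through path has exactly `n+1` vertices, and some (non-monotone) planar
straight-through path uses all `2n` points. -/
theorem stmt14 (n : ℕ) (hn : 1 ≤ n) :
    ∃ P : Finset (ℝ × ℝ), P.card = 2 * n ∧
      (∀ q ∈ P, ∀ q' ∈ P, q ≠ q' → q.1 ≠ q'.1 ∧ q.2 ≠ q'.2) ∧
      (∀ k p b, IsSTPath P k p b → XMonotone k p → k ≤ n + 1) ∧
      (∃ p b, IsSTPath P (n + 1) p b ∧ XMonotone (n + 1) p) ∧
      (∃ p b, IsSTPath P (2 * n) p b) := by
  exact ⟨(Finset.range (2*n)).image (st14pt n), st14_card n, st14_genpos n hn,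
    st14_upper n hn, st14_mono_exists n hn, st14_ham_exists n hn⟩
end

section
/- Suppose f : ℕ → ℝ≥0 satisfies f(1) ≤ c and, for every n ≥ 2 and every decomposition n = 1 + a + b + r with 0 ≤ a ≤ b ≤ r, f(n) ≤ 2·f(a) + 2·f(b) + f(r) (with f(0) = 0). Then f(n) ≤ c·n^(log₂ 3) for all n ≥ 1. -/
/-- If `f : ℕ → ℝ` is nonnegative with `f 0 = 0`, `f 1 ≤ c`, and satisfies
`f n ≤ 2 f a + 2 f b + f r` for every `n ≥ 2` and every decomposition
`n = 1 + a + b + r` with `a ≤ b ≤ r`, then `f n ≤ c · n^(log₂ 3)` for all `n ≥ 1`. -/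
theorem stmt18 (f : ℕ → ℝ) (c : ℝ) (hnn : ∀ n, 0 ≤ f n)
    (h0 : f 0 = 0) (h1 : f 1 ≤ c)
    (hrec : ∀ n : ℕ, 2 ≤ n → ∀ a b r : ℕ, a ≤ b → b ≤ r → n = 1 + a + b + r →
      f n ≤ 2 * f a + 2 * f b + f r) :
    ∀ n : ℕ, 1 ≤ n → f n ≤ c * (n : ℝ) ^ (Real.logb 2 3) := by
  set t := Real.logb 2 3 with htdef
  have hc : 0 ≤ c := le_trans (hnn 1) h1
  have ht0 : 0 ≤ t := Real.logb_nonneg (by norm_num) (by norm_num)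
  have h2t : (2 : ℝ) ^ t = 3 := Real.rpow_logb (by norm_num) (by norm_num) (by norm_num)
  intro n
  induction n using Nat.strong_induction_on with
  | _ n ih =>
    intro hn
    rcases eq_or_lt_of_le hn with h | h
    · subst h
      simpa [Real.one_rpow] using h1
    · have h2 : 2 ≤ n := h
      set b := (n - 1) / 2 with hbdef
      set r := (n - 1) - b with hrdef
      have hbr : b ≤ r := by omega
      have hsum : n = 1 + 0 + b + r := by omega
      have hf := hrec n h2 0 b r (Nat.zero_le _) hbr hsum
      rw [h0] at hf
      have hnpos : (0 : ℝ) < (n : ℝ) := by positivity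
      -- both b and r are at most n/2
      have key : ∀ k : ℕ, 2 * k ≤ n → k < n → f k ≤ c * ((n : ℝ) / 2) ^ t := by
        intro k hk hklt
        have hk2 : (k : ℝ) ≤ (n : ℝ) / 2 := by
          rw [le_div_iff₀ (by norm_num)]
          exact_mod_cast by linarith [hk]
        rcases Nat.eq_zero_or_pos k with hk0 | hk1
        · rw [hk0, h0]
          positivity
        · calc f k ≤ c * (k : ℝ) ^ t := ih k hklt hk1
            _ ≤ c * ((n : ℝ) / 2) ^ t := by
                apply mul_le_mul_of_nonneg_left _ hc
                exact Real.rpow_le_rpow (by positivity) hk2 ht0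
      have hb : f b ≤ c * ((n : ℝ) / 2) ^ t := key b (by omega) (by omega)
      have hr : f r ≤ c * ((n : ℝ) / 2) ^ t := key r (by omega) (by omega)
      have hhalf : ((n : ℝ) / 2) ^ t = (n : ℝ) ^ t / 3 := by
        rw [Real.div_rpow (le_of_lt hnpos) (by norm_num), h2t]
      have : f n ≤ 3 * (c * ((n : ℝ) / 2) ^ t) := by linarith
      calc f n ≤ 3 * (c * ((n : ℝ) / 2) ^ t) := this
        _ = c * (n : ℝ) ^ t := by rw [hhalf]; ring
end

section
/- For α = log₂ 3, the maximum of the function F(a,b,r) = 2a^α + 2b^α + r^α over the simplex {(a,b,r) : 0 ≤ a ≤ b ≤ r, a + b + r ≤ 1} equals 1, attained at (0, 1/2, 1/2). -/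
open Real

private lemma alpha_pos : (0:ℝ) < Real.logb 2 3 :=
  Real.logb_pos one_lt_two (by norm_num)

private lemma alpha_ge' : (3:ℝ)/2 ≤ Real.logb 2 3 := by
  rw [Real.le_logb_iff_rpow_le one_lt_two (by norm_num)]
  have : ((2:ℝ) ^ ((3:ℝ)/2)) ^ (2:ℕ) = 2 ^ (3:ℕ) := by
    rw [← Real.rpow_natCast (_ ^ _), ← Real.rpow_mul (by norm_num)]
    norm_num
  nlinarith [Real.rpow_nonneg (show (0:ℝ) ≤ 2 by norm_num) ((3:ℝ)/2)]

private lemma alpha_ge_one : (1:ℝ) ≤ Real.logb 2 3 :=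
  le_trans (by norm_num) alpha_ge'


private lemma two_rpow : (2:ℝ) ^ Real.logb 2 3 = 3 :=
  Real.rpow_logb (by norm_num) (by norm_num) (by norm_num)

private lemma half_rpow : ((1/2 : ℝ)) ^ Real.logb 2 3 = 1/3 := by
  rw [show (1/2:ℝ) = 2⁻¹ by norm_num, Real.inv_rpow (by norm_num), two_rpow]
  norm_num

private lemma alpha_ge : (3:ℝ)/2 ≤ Real.logb 2 3 := by
  rw [Real.le_logb_iff_rpow_le one_lt_two (by norm_num)]
  rw [show (3:ℝ)/2 = (3:ℝ)/2 from rfl]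
  have : ((2:ℝ) ^ ((3:ℝ)/2)) ^ (2:ℕ) = 2 ^ (3:ℕ) := by
    rw [← Real.rpow_natCast (_ ^ _), ← Real.rpow_mul (by norm_num)]
    norm_num
  nlinarith [Real.rpow_nonneg (show (0:ℝ) ≤ 2 by norm_num) ((3:ℝ)/2)]

private lemma three_rpow_ge : (5:ℝ) ≤ (3:ℝ) ^ Real.logb 2 3 := by
  have h1 : (3:ℝ) ^ ((3:ℝ)/2) ≤ (3:ℝ) ^ Real.logb 2 3 :=
    Real.rpow_le_rpow_of_exponent_le (by norm_num) alpha_ge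
  have h2 : (5:ℝ) ≤ (3:ℝ) ^ ((3:ℝ)/2) := by
    have : ((3:ℝ) ^ ((3:ℝ)/2)) ^ (2:ℕ) = 3 ^ (3:ℕ) := by
      rw [← Real.rpow_natCast (_ ^ _), ← Real.rpow_mul (by norm_num)]
      norm_num
    nlinarith [Real.rpow_nonneg (show (0:ℝ) ≤ 3 by norm_num) ((3:ℝ)/2)]
  linarith

/-- Jensen: `(u/3 + v/2 + w)^α ≤ u·(1/3)^α + v·(1/2)^α + w` for nonneg weights summing ≤ 1. -/
private lemma jensen3 {α u v w : ℝ} (hα : 1 ≤ α) (hu : 0 ≤ u) (hv : 0 ≤ v) (hw : 0 ≤ w)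
    (hs : u + v + w ≤ 1) :
    (u/3 + v/2 + w) ^ α ≤ u * (1/3:ℝ) ^ α + v * (1/2:ℝ) ^ α + w := by
  have hcvx := convexOn_rpow hα
  have key := hcvx.map_sum_le (t := Finset.univ) (w := ![u, v, w, 1 - u - v - w])
      (p := ![(1/3:ℝ), 1/2, 1, 0]) ?_ ?_ ?_
  · have h0 : (0:ℝ) ^ α = 0 := Real.zero_rpow (by linarith)
    simp only [Fin.sum_univ_four, smul_eq_mul, Matrix.cons_val_zero, Matrix.cons_val_one,
      Matrix.head_cons, Matrix.cons_val_two, Matrix.tail_cons, Matrix.cons_val_three,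
      h0, Real.one_rpow, mul_one, mul_zero, add_zero] at key
    have e : u/3 + v/2 + w = u * (1/3) + v * (1/2) + w := by ring
    rw [e]
    linarith [key]
  · intro i _
    fin_cases i <;> simp <;> linarith
  · simp [Fin.sum_univ_four]
  · intro i _
    fin_cases i <;> norm_num

/-- For `α = log₂ 3`, the maximum of `2a^α + 2b^α + r^α` over
`{(a,b,r) : 0 ≤ a ≤ b ≤ r, a + b + r ≤ 1}` equals `1`, attained at `(0, 1/2, 1/2)`. -/
theorem stmt19 (α : ℝ) (hα : α = Real.logb 2 3) :
    IsGreatest {v : ℝ | ∃ a b r : ℝ, 0 ≤ a ∧ a ≤ b ∧ b ≤ r ∧ a + b + r ≤ 1 ∧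
      v = 2 * a ^ α + 2 * b ^ α + r ^ α} 1 ∧
    2 * (0 : ℝ) ^ α + 2 * ((1 / 2 : ℝ)) ^ α + ((1 / 2 : ℝ)) ^ α = 1 := by
  subst hα
  have h0 : (0:ℝ) ^ Real.logb 2 3 = 0 := Real.zero_rpow (ne_of_gt alpha_pos)
  have hval : 2 * (0 : ℝ) ^ Real.logb 2 3 + 2 * ((1 / 2 : ℝ)) ^ Real.logb 2 3
      + ((1 / 2 : ℝ)) ^ Real.logb 2 3 = 1 := by
    rw [h0, half_rpow]; norm_num
  refine ⟨⟨⟨0, 1/2, 1/2, by norm_num, by norm_num, le_refl _, by norm_num, hval.symm⟩, ?_⟩, hval⟩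
  rintro x ⟨a, b, r, ha, hab, hbr, hsum, rfl⟩
  set α := Real.logb 2 3 with hαdef
  have h1 : a ^ α ≤ (3*a) * (1/3:ℝ) ^ α + 0 * (1/2:ℝ) ^ α + 0 := by
    have := jensen3 (α := α) alpha_ge_one (by linarith : (0:ℝ) ≤ 3*a) le_rfl le_rfl
      (by linarith)
    simpa [show 3*a/3 + 0/2 + 0 = a by ring] using this
  have h2 : b ^ α ≤ (3*a) * (1/3:ℝ) ^ α + (2*(b-a)) * (1/2:ℝ) ^ α + 0 := by
    have := jensen3 (α := α) alpha_ge_one (by linarith : (0:ℝ) ≤ 3*a)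
      (by linarith : (0:ℝ) ≤ 2*(b-a)) le_rfl (by linarith)
    simpa [show 3*a/3 + 2*(b-a)/2 + 0 = b by ring] using this
  have h3 : r ^ α ≤ (3*a) * (1/3:ℝ) ^ α + (2*(b-a)) * (1/2:ℝ) ^ α + (r - b) := by
    have := jensen3 (α := α) alpha_ge_one (by linarith : (0:ℝ) ≤ 3*a)
      (by linarith : (0:ℝ) ≤ 2*(b-a)) (by linarith : (0:ℝ) ≤ r - b) (by linarith)
    simpa [show 3*a/3 + 2*(b-a)/2 + (r-b) = r by ring] using this
  have h13 : ((1/3:ℝ)) ^ α = 1 / 3 ^ α := by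
    rw [show (1/3:ℝ) = 3⁻¹ by norm_num, Real.inv_rpow (by norm_num)]
    simp [one_div]
  have h5 : (15 * a) * ((1/3:ℝ)) ^ α ≤ 3 * a := by
    rw [h13]
    rw [div_eq_inv_mul, ← mul_assoc]
    have h3pos : (0:ℝ) < 3 ^ α := Real.rpow_pos_of_pos (by norm_num) _
    rw [mul_one, mul_inv_le_iff₀ h3pos]
    nlinarith [three_rpow_ge]
  have hhalf : ((1/2:ℝ)) ^ α = 1/3 := half_rpow
  calc 2 * a ^ α + 2 * b ^ α + r ^ α
      ≤ 2 * ((3*a) * (1/3:ℝ) ^ α + 0 * (1/2:ℝ) ^ α + 0)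
        + 2 * ((3*a) * (1/3:ℝ) ^ α + (2*(b-a)) * (1/2:ℝ) ^ α + 0)
        + ((3*a) * (1/3:ℝ) ^ α + (2*(b-a)) * (1/2:ℝ) ^ α + (r - b)) := by
        gcongr
    _ = (15*a) * (1/3:ℝ) ^ α + (6*(b-a)) * (1/3:ℝ) + (r - b) := by rw [hhalf]; ring
    _ ≤ 3*a + (6*(b-a)) * (1/3:ℝ) + (r - b) := by linarith [h5]
    _ = a + b + r := by ring
    _ ≤ 1 := hsum
end
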